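/- arXiv:2603.28118 — 12 statements merged into one kernel-verified Lean document; each statement's English description precedes it below -/
import Mathlib

section
/- Let C be a longest chain of a finite poset P and define the subposets P_0,…,P_k as the sets P_i = {u ∈ P : u ⋠ c_i, u ⋡ c_{i+1}} (with the virtual-element conventions). Then every antichain A of P \ C is contained in at least one of the sets P_0,…,P_k. -/
open Finset

variable {α : Type*}

/-- `u ≼ cᵢ` with the virtual conventions: the virtual element `c_{k+1}` lies above
everything (and `c₀` below everything, so `u ≼ c₀` never holds). -/
def leC [PartialOrder α] (k : ℕ) (c : ℕ → α) (u : α) (i : ℕ) : Prop :=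
  i = k + 1 ∨ (1 ≤ i ∧ i ≤ k ∧ u ≤ c i)

/-- `cᵢ ≼ u` with the virtual conventions: `c₀` lies below everything. -/
def cLe [PartialOrder α] (k : ℕ) (c : ℕ → α) (u : α) (i : ℕ) : Prop :=
  i = 0 ∨ (1 ≤ i ∧ i ≤ k ∧ c i ≤ u)

/-- `s_u = max { i : cᵢ ≼ u }`. -/
noncomputable def sIdx [PartialOrder α] (k : ℕ) (c : ℕ → α) (u : α) : ℕ :=
  sSup {i | cLe k c u i}

/-- `l_u = min { i : u ≼ cᵢ }`. -/
noncomputable def lIdx [PartialOrder α] (k : ℕ) (c : ℕ → α) (u : α) : ℕ :=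
  sInf {i | leC k c u i}

/-- `u ∈ Pᵢ`, i.e. `u ⋠ cᵢ` and `u ⋡ c_{i+1}`. -/
def memP [PartialOrder α] (k : ℕ) (c : ℕ → α) (i : ℕ) (u : α) : Prop :=
  ¬ leC k c u i ∧ ¬ cLe k c u (i + 1)

/-- `u` is incomparable with `cᵢ` (virtual elements are comparable to everything). -/
def incompC [PartialOrder α] (k : ℕ) (c : ℕ → α) (u : α) (i : ℕ) : Prop :=
  ¬ leC k c u i ∧ ¬ cLe k c u i

/-- The underlying set `C = {c₁, …, c_k}` of the chain. -/
def chainSet (k : ℕ) (c : ℕ → α) : Set α := c '' (Set.Icc 1 k)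

/-- `c₁ ≺ c₂ ≺ ⋯ ≺ c_k` is a chain of maximum cardinality in the finite poset `α`. -/
def IsLongestChain [PartialOrder α] [Fintype α] (k : ℕ) (c : ℕ → α) : Prop :=
  (∀ i j, 1 ≤ i → i < j → j ≤ k → c i < c j) ∧
  ∀ D : Finset α, IsChain (· ≤ ·) (D : Set α) → D.card ≤ k

/-
Choose `w ∈ A` whose index `s_w = max {i : cᵢ ≼ w}` is largest and take `i = s_w`. An element
`v ∈ A` with `c_{i+1} ≼ v` would have `s_v > s_w`; one with `v ≼ cᵢ` would satisfy
`v ≼ cᵢ ≼ w`, which for an antichain forces `v = cᵢ = w ∈ C`.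
-/

section ChainIndex

variable [PartialOrder α] {k : ℕ} {c : ℕ → α}

lemma bddAbove_setOf_cLe (u : α) : BddAbove {i | cLe k c u i} :=
  ⟨k, fun _ h => by rcases h with h | ⟨_, h, _⟩ <;> omega⟩

lemma cLe_sIdx (u : α) : cLe k c u (sIdx k c u) :=
  Nat.sSup_mem ⟨0, Or.inl rfl⟩ (bddAbove_setOf_cLe u)

lemma sIdx_le (u : α) : sIdx k c u ≤ k := by
  rcases cLe_sIdx (k := k) (c := c) u with h | ⟨_, h, _⟩ <;> omega

lemma le_sIdx_of_cLe {u : α} {i : ℕ} (h : cLe k c u i) : i ≤ sIdx k c u :=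
  le_csSup (bddAbove_setOf_cLe u) h

lemma exists_mem_chainSet_of_leC_of_cLe {u v : α} {i : ℕ} (hv : leC k c v i)
    (hu : cLe k c u i) : ∃ x ∈ chainSet k c, v ≤ x ∧ x ≤ u := by
  rcases hv with rfl | ⟨hi1, hik, hvc⟩
  · rcases hu with hu | ⟨-, hu, -⟩ <;> omega
  rcases hu with rfl | ⟨-, -, hcu⟩
  · omega
  exact ⟨c i, ⟨i, ⟨hi1, hik⟩, rfl⟩, hvc, hcu⟩

lemma exists_mem_forall_sIdx_le {A : Set α} (hA : A.Nonempty) :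
    ∃ w ∈ A, ∀ v ∈ A, sIdx k c v ≤ sIdx k c w := by
  have hbdd : BddAbove (sIdx k c '' A) := ⟨k, Set.forall_mem_image.2 fun u _ => sIdx_le u⟩
  obtain ⟨w, hwA, hw⟩ := Nat.sSup_mem (hA.image _) hbdd
  exact ⟨w, hwA, fun v hv => hw ▸ le_csSup hbdd (Set.mem_image_of_mem _ hv)⟩

end ChainIndex

theorem stmt_2_general [PartialOrder α] (k : ℕ) (c : ℕ → α)
    (A : Set α) (hA : IsAntichain (· ≤ ·) A)
    (hAC : ∀ u ∈ A, u ∉ chainSet k c) :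
    ∃ i ≤ k, ∀ u ∈ A, memP k c i u := by
  rcases A.eq_empty_or_nonempty with rfl | hne
  · exact ⟨0, k.zero_le, by simp⟩
  obtain ⟨w, hwA, hwmax⟩ := exists_mem_forall_sIdx_le (k := k) (c := c) hne
  refine ⟨sIdx k c w, sIdx_le w, fun v hvA => ⟨fun hle => ?_, fun hcle => ?_⟩⟩
  · obtain ⟨x, hxC, hvx, hxw⟩ := exists_mem_chainSet_of_leC_of_cLe hle (cLe_sIdx w)
    obtain rfl : v = w := hA.eq hvA hwA (hvx.trans hxw)
    exact hAC v hvA (le_antisymm hxw hvx ▸ hxC)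
  · have := le_sIdx_of_cLe hcle
    have := hwmax v hvA
    omega

/-- Every antichain of `P \ C` is contained in at least one of the posets `P₀, …, P_k`. -/
theorem stmt_2 [PartialOrder α] [Fintype α] (k : ℕ) (c : ℕ → α)
    (hC : IsLongestChain k c) (A : Set α) (hA : IsAntichain (· ≤ ·) A)
    (hAC : ∀ u ∈ A, u ∉ chainSet k c) :
    ∃ i ≤ k, ∀ u ∈ A, memP k c i u :=
  stmt_2_general k c A hA hAC
end

section
/- With the setup of a longest chain C = {c_1 ≺ ⋯ ≺ c_k} in a finite poset P, an antichain A of P \ C is contained in at least two of the posets P_0,…,P_k if and only if C contains an element incomparable to all elements of A. -/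
open Finset

variable {α : Type*}

/-- An antichain of `P \ C` lies in at least two of the posets `P₀, …, P_k` if and only if
`C` contains an element incomparable to all elements of `A`. -/
theorem stmt_3 [PartialOrder α] [Fintype α] (k : ℕ) (c : ℕ → α)
    (hC : IsLongestChain k c) (A : Set α) (hA : IsAntichain (· ≤ ·) A)
    (hAC : ∀ u ∈ A, u ∉ chainSet k c) :
    (∃ i j, i ≤ k ∧ j ≤ k ∧ i ≠ j ∧ (∀ u ∈ A, memP k c i u) ∧ (∀ u ∈ A, memP k c j u)) ↔
      ∃ i, 1 ≤ i ∧ i ≤ k ∧ ∀ u ∈ A, incompC k c u i := by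
  obtain ⟨hmono, -⟩ := hC
  have key : ∀ i j : ℕ, i < j → j ≤ k → (∀ u ∈ A, memP k c i u) →
      (∀ u ∈ A, memP k c j u) → ∀ u ∈ A, incompC k c u (i + 1) := by
    intro i j hlt hjk hPi hPj u hu
    obtain ⟨hi1, hi2⟩ := hPi u hu
    obtain ⟨hj1, hj2⟩ := hPj u hu
    refine ⟨?_, hi2⟩
    rintro (h | ⟨h1, h2, h3⟩)
    · omega
    · refine hj1 (Or.inr ⟨by omega, by omega, ?_⟩)
      rcases Nat.lt_or_ge (i + 1) j with h' | h'
      · exact h3.trans (hmono (i + 1) j h1 h' hjk).le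
      · have : i + 1 = j := by omega
        exact this ▸ h3
  constructor
  · rintro ⟨i, j, hik, hjk, hij, hPi, hPj⟩
    rcases Nat.lt_or_ge i j with hlt | hge
    · exact ⟨i + 1, by omega, by omega, key i j hlt hjk hPi hPj⟩
    · have hlt : j < i := by omega
      exact ⟨j + 1, by omega, by omega, key j i hlt hik hPj hPi⟩
  · rintro ⟨i, hi1, hi2, hinc⟩
    refine ⟨i - 1, i, by omega, by omega, by omega, fun u hu => ?_, fun u hu => ?_⟩
    · obtain ⟨h1, h2⟩ := hinc u hu
      constructor
      · rintro (h | ⟨g1, g2, g3⟩)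
        · omega
        · refine h1 (Or.inr ⟨hi1, hi2, ?_⟩)
          rcases Nat.lt_or_ge (i - 1) i with h' | h'
          · exact g3.trans (hmono (i - 1) i g1 h' hi2).le
          · omega
      · have : i - 1 + 1 = i := by omega
        rw [this]; exact h2
    · obtain ⟨h1, h2⟩ := hinc u hu
      refine ⟨h1, ?_⟩
      rintro (h | ⟨g1, g2, g3⟩)
      · omega
      · exact h2 (Or.inr ⟨hi1, hi2, (hmono i (i + 1) hi1 (by omega) g2).le.trans g3⟩)
end

section
/- Every element of P \ C lies in at least two of the posets P_0,…,P_k, where C is a longest chain of the finite poset P. -/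
open Finset

variable {α : Type*}

/-- Every element of `P \ C` lies in at least two of the posets `P₀, …, P_k`. -/
theorem stmt_4 [PartialOrder α] [Fintype α] (k : ℕ) (c : ℕ → α)
    (hC : IsLongestChain k c) (u : α) (hu : u ∉ chainSet k c) :
    ∃ i j, i ≤ k ∧ j ≤ k ∧ i ≠ j ∧ memP k c i u ∧ memP k c j u := by
  classical
  obtain ⟨hmono, hmax⟩ := hC
  set S : Set ℕ := {i | cLe k c u i} with hSdef
  set L : Set ℕ := {i | leC k c u i} with hLdef
  have hSne : S.Nonempty := ⟨0, Or.inl rfl⟩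
  have hLne : L.Nonempty := ⟨k + 1, Or.inl rfl⟩
  have hSbdd : BddAbove S := ⟨k, by
    rintro i (rfl | ⟨h1, h2, h3⟩)
    · exact Nat.zero_le k
    · exact h2⟩
  set s := sSup S with hsdef
  set l := sInf L with hldef
  have hsS : cLe k c u s := Nat.sSup_mem hSne hSbdd
  have hlL : leC k c u l := Nat.sInf_mem hLne
  have hs_le : s ≤ k := by rcases hsS with h | ⟨_, h, _⟩ <;> omega
  have hl_le : l ≤ k + 1 := Nat.sInf_le (Or.inl rfl)
  have hl_pos : 1 ≤ l := by
    rcases Nat.eq_zero_or_pos l with h0 | h; swap; · exact h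
    rw [h0] at hlL
    rcases hlL with h | ⟨h, _⟩ <;> omega
  -- main claim : l ≥ s + 2
  have hkey : s + 2 ≤ l := by
    by_contra hcon
    push_neg at hcon
    rcases Nat.lt_or_ge l (s + 1) with hls | hls
    · -- l ≤ s
      have hls' : l ≤ s := by omega
      have hs1 : 1 ≤ s := le_trans hl_pos hls'
      rcases hsS with h0 | ⟨_, hsk, hcsu⟩
      · omega
      rcases hlL with h0 | ⟨hl1, hlk, hucl⟩
      · omega
      rcases eq_or_lt_of_le hls' with heq | hlt
      · exact hu ⟨l, ⟨hl1, hlk⟩, le_antisymm (heq ▸ hcsu) hucl⟩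
      · exact (hmono l s hl1 hlt hsk).not_ge (hcsu.trans hucl)
    · -- l = s + 1 : insert u into the chain
      have hls' : l = s + 1 := by omega
      have hcomp : ∀ i, 1 ≤ i → i ≤ k → c i ≤ u ∨ u ≤ c i := by
        intro i hi1 hik
        rcases le_or_gt i s with his | his
        · left
          rcases hsS with h0 | ⟨hs1, hsk, hcsu⟩
          · omega
          rcases eq_or_lt_of_le his with heq | hlt
          · exact heq ▸ hcsu
          · exact le_trans (hmono i s hi1 hlt hsk).le hcsu
        · right
          have hli : l ≤ i := by omega
          rcases hlL with h0 | ⟨hl1, hlk, hucl⟩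
          · omega
          rcases eq_or_lt_of_le hli with heq | hlt
          · exact heq ▸ hucl
          · exact le_trans hucl (hmono l i hl1 hlt hik).le
      set D : Finset α := insert u ((Finset.Icc 1 k).image c) with hDdef
      have hnotmem : u ∉ (Finset.Icc 1 k).image c := by
        intro hmem
        obtain ⟨i, hi, hci⟩ := Finset.mem_image.mp hmem
        rw [Finset.mem_Icc] at hi
        exact hu ⟨i, ⟨hi.1, hi.2⟩, hci⟩
      have hinj : Set.InjOn c (Finset.Icc 1 k : Set ℕ) := by
        intro a ha b hb hab
        simp only [Finset.coe_Icc, Set.mem_Icc] at ha hb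
        by_contra hne
        rcases lt_or_gt_of_ne hne with h | h
        · exact absurd hab (hmono a b ha.1 h hb.2).ne
        · exact absurd hab.symm (hmono b a hb.1 h ha.2).ne
      have hcard : D.card = k + 1 := by
        rw [hDdef, Finset.card_insert_of_notMem hnotmem,
          Finset.card_image_of_injOn hinj, Nat.card_Icc]
        omega
      have hchain : IsChain (· ≤ ·) (D : Set α) := by
        intro a ha b hb hab
        simp only [hDdef, Finset.coe_insert, Set.mem_insert_iff, Finset.coe_image,
          Finset.coe_Icc, Set.mem_image, Set.mem_Icc] at ha hb
        rcases ha with rfl | ⟨i, ⟨hi1, hik⟩, rfl⟩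
        · rcases hb with rfl | ⟨j, ⟨hj1, hjk⟩, rfl⟩
          · exact absurd rfl hab
          · exact (hcomp j hj1 hjk).symm.imp id id
        · rcases hb with rfl | ⟨j, ⟨hj1, hjk⟩, rfl⟩
          · exact (hcomp i hi1 hik).imp id id
          · rcases lt_trichotomy i j with h | h | h
            · exact Or.inl (hmono i j hi1 h hjk).le
            · exact absurd (h ▸ rfl) hab
            · exact Or.inr (hmono j i hj1 h hik).le
      have := hmax D hchain
      omega
  -- conclude
  have hs1k : s + 1 ≤ k := by omega
  refine ⟨s, s + 1, hs_le, hs1k, by omega, ⟨?_, ?_⟩, ⟨?_, ?_⟩⟩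
  · intro h
    have : l ≤ s := Nat.sInf_le h
    omega
  · intro h
    have : s + 1 ≤ s := le_csSup hSbdd h
    omega
  · intro h
    have : l ≤ s + 1 := Nat.sInf_le h
    omega
  · intro h
    have : s + 2 ≤ s := le_csSup hSbdd h
    omega
end

section
/- Let P be a finite poset with a longest chain C = {c_1 ≺ ⋯ ≺ c_k}, and for an ideal I of P let ζ(I) = max{i : c_i ∈ I} (ζ(I) = 0 if I ∩ C = ∅). Let 𝓘_i(P) be the set of ideals I with ζ(I) = i, D_i the downset of c_i (D_0 = ∅), and P_i = {u ∈ P : u ⋠ c_i, u ⋡ c_{i+1}}. Then for each i ∈ {0,…,k}, the map φ_i sending I ∈ 𝓘_i(P) to I \ D_i is a well-defined bijection from 𝓘_i(P) to the set of ideals of the induced subposet P_i, with inverse I' ↦ I' ∪ D_i. -/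
open Finset

variable {α : Type*}

/-- `I` is an ideal (downward-closed subset) of the poset `α`. -/
def IsIdealSet [PartialOrder α] (I : Set α) : Prop :=
  ∀ u ∈ I, ∀ v, v ≤ u → v ∈ I

/-- `ζ(I) = i`: `cᵢ` is the largest element of `C` in `I` (and `ζ(I) = 0` if `I ∩ C = ∅`). -/
def zetaEq [PartialOrder α] (k : ℕ) (c : ℕ → α) (I : Set α) (i : ℕ) : Prop :=
  (i = 0 ∧ ∀ j, 1 ≤ j → j ≤ k → c j ∉ I) ∨
  (1 ≤ i ∧ i ≤ k ∧ c i ∈ I ∧ ∀ j, i < j → j ≤ k → c j ∉ I)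

/-- `Dᵢ`, the downset of `cᵢ` (with `D₀ = ∅`). -/
def Dset [PartialOrder α] (k : ℕ) (c : ℕ → α) (i : ℕ) : Set α :=
  {u | 1 ≤ i ∧ i ≤ k ∧ u ≤ c i}

/-- The subposet `Pᵢ` as a subset of `α`. -/
def Pset [PartialOrder α] (k : ℕ) (c : ℕ → α) (i : ℕ) : Set α :=
  {u | memP k c i u}

/-- `I` is an ideal of the induced subposet on `S`: `I ⊆ S` and `I` is
downward-closed within `S`. -/
def IsIdealOf [PartialOrder α] (S I : Set α) : Prop :=
  I ⊆ S ∧ ∀ u ∈ I, ∀ v ∈ S, v ≤ u → v ∈ I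

/-- The map `I ↦ I \ Dᵢ` is a well-defined bijection from `𝓘ᵢ(P)` (the ideals `I` of `P`
with `ζ(I) = i`) onto the ideals of the subposet `Pᵢ`, with inverse `I' ↦ I' ∪ Dᵢ`. -/
theorem stmt_6 [PartialOrder α] [Fintype α] (k : ℕ) (c : ℕ → α)
    (hC : IsLongestChain k c) (i : ℕ) (hi : i ≤ k) :
    Set.BijOn (fun I => I \ Dset k c i)
      {I : Set α | IsIdealSet I ∧ zetaEq k c I i}
      {J : Set α | IsIdealOf (Pset k c i) J} ∧
    ∀ J : Set α, IsIdealOf (Pset k c i) J →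
      IsIdealSet (J ∪ Dset k c i) ∧ zetaEq k c (J ∪ Dset k c i) i ∧
      (J ∪ Dset k c i) \ Dset k c i = J := by
  obtain ⟨hchain, -⟩ := hC
  have hmono : ∀ p q, 1 ≤ p → p ≤ q → q ≤ k → c p ≤ c q := by
    intro p q h1 hpq hq
    rcases eq_or_lt_of_le hpq with rfl | h
    · exact le_rfl
    · exact (hchain p q h1 h hq).le
  have hDsub : ∀ I : Set α, IsIdealSet I → zetaEq k c I i → Dset k c i ⊆ I := by
    intro I hI hz u hu
    obtain ⟨h1, hk, hle⟩ := hu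
    rcases hz with ⟨h0, _⟩ | ⟨_, _, hci, _⟩
    · omega
    · exact hI _ hci _ hle
  have hPD : ∀ u, u ∈ Pset k c i → u ∉ Dset k c i := by
    intro u hu hd
    exact hu.1 (Or.inr ⟨hd.1, hd.2.1, hd.2.2⟩)
  have hmaps : ∀ I : Set α, IsIdealSet I → zetaEq k c I i →
      IsIdealOf (Pset k c i) (I \ Dset k c i) := by
    intro I hI hz
    constructor
    · rintro u ⟨huI, huD⟩
      constructor
      · rintro (h | ⟨h1, h2, h3⟩)
        · omega
        · exact huD ⟨h1, h2, h3⟩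
      · rintro (h | ⟨h1, h2, h3⟩)
        · omega
        · have hmem : c (i+1) ∈ I := hI _ huI _ h3
          rcases hz with ⟨-, hnone⟩ | ⟨-, -, -, hnone⟩
          · exact hnone (i+1) h1 h2 hmem
          · exact hnone (i+1) (by omega) h2 hmem
    · rintro u ⟨huI, huD⟩ v hv hvu
      exact ⟨hI _ huI _ hvu, hPD v hv⟩
  have hrev : ∀ J, IsIdealOf (Pset k c i) J →
      IsIdealSet (J ∪ Dset k c i) ∧ zetaEq k c (J ∪ Dset k c i) i ∧
      (J ∪ Dset k c i) \ Dset k c i = J := by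
    rintro J ⟨hJP, hJdc⟩
    have hJD : ∀ u ∈ J, u ∉ Dset k c i := fun u hu => hPD u (hJP hu)
    refine ⟨?_, ?_, ?_⟩
    · rintro u (huJ | huD) v hvu
      · by_cases hvD : v ∈ Dset k c i
        · exact Or.inr hvD
        · left
          refine hJdc u huJ v ?_ hvu
          constructor
          · rintro (h | ⟨h1, h2, h3⟩)
            · omega
            · exact hvD ⟨h1, h2, h3⟩
          · rintro (h | ⟨h1, h2, h3⟩)
            · omega
            · exact (hJP huJ).2 (Or.inr ⟨h1, h2, h3.trans hvu⟩)
      · exact Or.inr ⟨huD.1, huD.2.1, hvu.trans huD.2.2⟩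
    · rcases Nat.eq_zero_or_pos i with rfl | hipos
      · left
        refine ⟨rfl, ?_⟩
        rintro j h1 hk2 (hJ | hD)
        · exact (hJP hJ).2 (Or.inr ⟨le_refl 1, by omega, hmono 1 j le_rfl h1 hk2⟩)
        · exact absurd hD.1 (by omega)
      · right
        refine ⟨hipos, hi, Or.inr ⟨hipos, hi, le_rfl⟩, ?_⟩
        rintro j hij hjk (hJ | hD)
        · exact (hJP hJ).2
            (Or.inr ⟨by omega, by omega, hmono (i+1) j (by omega) (by omega) hjk⟩)
        · exact absurd hD.2.2 (hchain i j hipos hij hjk).not_ge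
    · ext u
      simp only [Set.mem_diff, Set.mem_union]
      constructor
      · rintro ⟨hJ | hD, hnD⟩
        · exact hJ
        · exact absurd hD hnD
      · intro hu; exact ⟨Or.inl hu, hJD u hu⟩
  constructor
  · refine ⟨?_, ?_, ?_⟩
    · rintro I ⟨hI, hz⟩
      exact hmaps I hI hz
    · rintro I1 ⟨hI1, hz1⟩ I2 ⟨hI2, hz2⟩ heq
      have h1 := hDsub I1 hI1 hz1
      have h2 := hDsub I2 hI2 hz2
      have h3 : (I1 \ Dset k c i) ∪ Dset k c i = (I2 \ Dset k c i) ∪ Dset k c i := by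
        simp only at heq; rw [heq]
      rwa [Set.diff_union_of_subset h1, Set.diff_union_of_subset h2] at h3
    · intro J hJ
      obtain ⟨h1, h2, h3⟩ := hrev J hJ
      exact ⟨J ∪ Dset k c i, ⟨h1, h2⟩, h3⟩
  · exact hrev
end

section
/- With the longest-chain setup, the set of ideals of P is the disjoint union 𝓘_0(P) ∪ 𝓘_1(P) ∪ ⋯ ∪ 𝓘_k(P), where 𝓘_i(P) = {I ideal of P : ζ(I) = i} and ζ(I) is the largest index i with c_i ∈ I (0 if I contains no element of C). Consequently, the number of ideals of P equals the sum over i = 0,…,k of the number of ideals of P_i. -/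
open Finset

variable {α : Type*}

/-
An ideal `I` with `ζ(I) = i` contains the whole downset `Dᵢ` of `cᵢ` and avoids `c_{i+1}`, so every
element of `I \ Dᵢ` lies in `Pᵢ`; conversely, for an ideal `J` of `Pᵢ` the set `J ∪ Dᵢ` is an ideal
of `P` whose top chain element is `cᵢ`, because the chain is strictly increasing. Hence
`I ↦ I \ Dᵢ` identifies the ideals with `ζ = i` with the ideals of `Pᵢ`, and summing over the
`k + 1` possible values of `ζ` counts all ideals.
-/

theorem Nat.card_eq_sum_range_card_fiber {β : Type*} [Finite β] {n : ℕ} (f : β → ℕ)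
    (hf : ∀ b, f b < n) : Nat.card β = ∑ i ∈ range n, Nat.card {b // f b = i} := by
  let g : β → Fin n := fun b => ⟨f b, hf b⟩
  have : ∀ i : Fin n, Nat.card {b // g b = i} = Nat.card {b // f b = i} := fun i =>
    Nat.card_congr (Equiv.subtypeEquivRight fun b => Fin.ext_iff)
  rw [← Nat.card_congr (Equiv.sigmaFiberEquiv g), Nat.card_sigma, Fintype.sum_congr _ _ this,
    Fin.sum_univ_eq_sum_range (fun i => Nat.card {b // f b = i})]

section

variable {k : ℕ} {c : ℕ → α} {I : Set α} {i j : ℕ}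

open scoped Classical in
noncomputable def zeta (k : ℕ) (c : ℕ → α) (I : Set α) : ℕ :=
  Nat.findGreatest (fun j => 1 ≤ j ∧ c j ∈ I) k

theorem zeta_le : zeta k c I ≤ k := by
  classical exact Nat.findGreatest_le k

variable [PartialOrder α]

theorem IsLongestChain.strictMonoOn [Fintype α] (hC : IsLongestChain k c) :
    StrictMonoOn c (Set.Icc 1 k) :=
  fun i hi j hj hij => hC.1 i j hi.1 hij hj.2

theorem zetaEq_zeta : zetaEq k c I (zeta k c I) := by
  classical
  rcases Nat.eq_zero_or_pos (zeta k c I) with h0 | hpos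
  · refine Or.inl ⟨h0, fun j hj hjk hjI => ?_⟩
    exact Nat.findGreatest_eq_zero_iff.1 h0 hj hjk ⟨hj, hjI⟩
  · obtain ⟨-, hcI⟩ := Nat.findGreatest_of_ne_zero rfl hpos.ne'
    exact Or.inr ⟨hpos, zeta_le, hcI, fun j hij hjk hjI =>
      Nat.findGreatest_is_greatest hij hjk ⟨by omega, hjI⟩⟩

theorem zetaEq.le (hz : zetaEq k c I i) : i ≤ k := by
  rcases hz with ⟨rfl, -⟩ | ⟨-, hik, -⟩
  exacts [Nat.zero_le k, hik]

theorem zetaEq.unique (hi : zetaEq k c I i) (hj : zetaEq k c I j) : i = j := by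
  have no_gap : ∀ {i j}, zetaEq k c I i → zetaEq k c I j → ¬ i < j := by
    rintro i j hi (⟨rfl, -⟩ | ⟨hj1, hjk, hjI, -⟩) hij
    · omega
    rcases hi with ⟨-, hnone⟩ | ⟨-, -, -, habove⟩
    exacts [hnone j hj1 hjk hjI, habove j hij hjk hjI]
  exact le_antisymm (Nat.not_lt.1 (no_gap hj hi)) (Nat.not_lt.1 (no_gap hi hj))

theorem zetaEq_iff : zetaEq k c I i ↔ zeta k c I = i :=
  ⟨fun h => zetaEq_zeta.unique h, fun h => h ▸ zetaEq_zeta⟩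

theorem disjoint_Pset_Dset : Disjoint (Pset k c i) (Dset k c i) :=
  Set.disjoint_left.2 fun _ hu hD => hu.1 (Or.inr hD)

theorem Dset_subset_of_zetaEq (hI : IsIdealSet I) (hz : zetaEq k c I i) :
    Dset k c i ⊆ I := by
  rintro v ⟨hi, -, hv⟩
  rcases hz with ⟨rfl, -⟩ | ⟨-, -, hcI, -⟩
  exacts [absurd hi (by omega), hI _ hcI v hv]

theorem isIdealOf_diff_Dset (hI : IsIdealSet I) (hz : zetaEq k c I i) :
    IsIdealOf (Pset k c i) (I \ Dset k c i) := by
  have hik := hz.le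
  refine ⟨fun u ⟨huI, huD⟩ => ⟨?_, ?_⟩, fun u ⟨huI, _⟩ v hv hvu =>
    ⟨hI u huI v hvu, Set.disjoint_left.1 disjoint_Pset_Dset hv⟩⟩
  · rintro (h | hD)
    exacts [absurd h (by omega), huD hD]
  · rintro (h | ⟨h1, hk, hcu⟩)
    · omega
    have hcI : c (i + 1) ∈ I := hI u huI _ hcu
    rcases hz with ⟨rfl, hnone⟩ | ⟨-, -, -, habove⟩
    exacts [hnone _ h1 hk hcI, habove _ (Nat.lt_succ_self i) hk hcI]

theorem IsIdealOf.isIdealSet_union_Dset {J : Set α} (hik : i ≤ k)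
    (hJ : IsIdealOf (Pset k c i) J) : IsIdealSet (J ∪ Dset k c i) := by
  rintro u (huJ | ⟨hi, hik', hu⟩) v hvu
  · by_cases hv : leC k c v i
    · rcases hv with h | hD
      exacts [absurd h (by omega), Or.inr hD]
    · refine Or.inl (hJ.2 u huJ v ⟨hv, ?_⟩ hvu)
      rintro (h | ⟨h1, hk, hcv⟩)
      · omega
      · exact (hJ.1 huJ).2 (Or.inr ⟨h1, hk, hcv.trans hvu⟩)
  · exact Or.inr ⟨hi, hik', hvu.trans hu⟩

/-- Strict monotonicity of the chain is what pins `cᵢ` as the top chain element of `J ∪ Dᵢ`: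
`c_j ≥ c_{i+1}` cannot lie in `Pᵢ`, and `c_j > cᵢ` cannot lie in `Dᵢ`. -/
theorem IsIdealOf.zetaEq_union_Dset (hc : StrictMonoOn c (Set.Icc 1 k)) {J : Set α}
    (hik : i ≤ k) (hJ : IsIdealOf (Pset k c i) J) : zetaEq k c (J ∪ Dset k c i) i := by
  have habove : ∀ j, i < j → j ≤ k → c j ∉ J ∪ Dset k c i := by
    rintro j hij hjk (hjJ | ⟨hi, -, hji⟩)
    · exact (hJ.1 hjJ).2 (Or.inr ⟨by omega, by omega,
        (hc.le_iff_le ⟨by omega, by omega⟩ ⟨by omega, hjk⟩).2 hij⟩)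
    · exact absurd hji (hc.lt_iff_lt ⟨hi, hik⟩ ⟨by omega, hjk⟩ |>.2 hij).not_ge
  rcases Nat.eq_zero_or_pos i with rfl | hi
  · exact Or.inl ⟨rfl, fun j _ => habove j (by omega)⟩
  · exact Or.inr ⟨hi, hik, Or.inr ⟨hi, hik, le_rfl⟩, habove⟩

def idealsZetaEqEquiv (hc : StrictMonoOn c (Set.Icc 1 k)) (hik : i ≤ k) :
    {I : Set α // IsIdealSet I ∧ zetaEq k c I i} ≃ {J : Set α // IsIdealOf (Pset k c i) J} where
  toFun I := ⟨I.1 \ Dset k c i, isIdealOf_diff_Dset I.2.1 I.2.2⟩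
  invFun J := ⟨J.1 ∪ Dset k c i, J.2.isIdealSet_union_Dset hik, J.2.zetaEq_union_Dset hc hik⟩
  left_inv I := Subtype.ext (Set.sdiff_union_of_subset (Dset_subset_of_zetaEq I.2.1 I.2.2))
  right_inv J := Subtype.ext <| Set.union_sdiff_cancel_right <|
    Set.disjoint_iff.1 (disjoint_Pset_Dset.mono_left J.2.1)

end

/-- The ideals of `P` are partitioned as `𝓘₀(P) ∪ ⋯ ∪ 𝓘_k(P)` according to the value of
`ζ`; consequently the number of ideals of `P` equals the sum over `i = 0, …, k` of the
number of ideals of `Pᵢ`. -/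
theorem stmt_7 [PartialOrder α] [Fintype α] (k : ℕ) (c : ℕ → α)
    (hC : IsLongestChain k c) :
    (∀ I : Set α, IsIdealSet I → ∃! i, i ≤ k ∧ zetaEq k c I i) ∧
    Nat.card {I : Set α // IsIdealSet I} =
      ∑ i ∈ Finset.range (k + 1), Nat.card {J : Set α // IsIdealOf (Pset k c i) J} := by
  refine ⟨fun I _ => ⟨zeta k c I, ⟨zeta_le, zetaEq_zeta⟩, fun i hi => hi.2.unique zetaEq_zeta⟩, ?_⟩
  calc Nat.card {I : Set α // IsIdealSet I}
      = ∑ i ∈ range (k + 1), Nat.card {I : {I : Set α // IsIdealSet I} // zeta k c I.1 = i} :=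
        Nat.card_eq_sum_range_card_fiber _ fun I => Nat.lt_succ_of_le zeta_le
    _ = ∑ i ∈ range (k + 1), Nat.card {J : Set α // IsIdealOf (Pset k c i) J} := by
        refine Finset.sum_congr rfl fun i hi => Nat.card_congr ?_
        refine (Equiv.subtypeSubtypeEquivSubtypeInter IsIdealSet (zeta k c · = i)).trans
          ((Equiv.subtypeEquivRight fun _ => and_congr_right' zetaEq_iff.symm).trans
            (idealsZetaEqEquiv hC.strictMonoOn (Nat.lt_succ_iff.1 (mem_range.1 hi))))
end

section
/- Let I be an ideal of P with ζ(I) = i for some i ∈ {0,…,k−2}, where C = {c_1 ≺ ⋯ ≺ c_k} is a longest chain of P. Then I ∪ {c_{i+1}, c_{i+2}} is an ideal of P if and only if L_{i+1} ∪ L_{i+2} ⊆ I, where L_j = {u ∈ P \ C : l_u = j}. -/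
open Finset

variable {α : Type*}

/-- `Lⱼ = { u ∈ P \ C : l_u = j }`. -/
noncomputable def Lset [PartialOrder α] (k : ℕ) (c : ℕ → α) (j : ℕ) : Set α :=
  {u | u ∉ chainSet k c ∧ lIdx k c u = j}


lemma leC_lIdx [PartialOrder α] (k : ℕ) (c : ℕ → α) (u : α) : leC k c u (lIdx k c u) := by
  have h : {i | leC k c u i}.Nonempty := ⟨k + 1, Or.inl rfl⟩
  exact Nat.sInf_mem h

lemma lIdx_le [PartialOrder α] {k : ℕ} {c : ℕ → α} {u : α} {j : ℕ} (h : leC k c u j) :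
    lIdx k c u ≤ j := Nat.sInf_le h

/-- For an ideal `I` with `ζ(I) = i`, `i ≤ k - 2`: the set `I ∪ {c_{i+1}, c_{i+2}}` is an
ideal of `P` iff `L_{i+1} ∪ L_{i+2} ⊆ I`. -/
theorem stmt_8 [PartialOrder α] [Fintype α] (k : ℕ) (c : ℕ → α)
    (hC : IsLongestChain k c) (I : Set α) (hI : IsIdealSet I)
    (i : ℕ) (hik : i + 2 ≤ k) (hz : zetaEq k c I i) :
    IsIdealSet (I ∪ {c (i + 1), c (i + 2)}) ↔ Lset k c (i + 1) ∪ Lset k c (i + 2) ⊆ I := by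
  obtain ⟨hmono, _⟩ := hC
  have hle : ∀ a b, 1 ≤ a → a ≤ b → b ≤ k → c a ≤ c b := by
    intro a b ha hab hbk
    rcases eq_or_lt_of_le hab with rfl | h
    · exact le_rfl
    · exact (hmono a b ha h hbk).le
  have hlIdx : ∀ u : α, u ∉ chainSet k c → lIdx k c u = i + 1 ∨ lIdx k c u = i + 2 →
      u ≤ c (i + 2) := by
    intro u huC hl
    have hmem : leC k c u (lIdx k c u) := leC_lIdx k c _
    rcases hmem with h | ⟨h1, h2, h3⟩
    · omega
    · calc u ≤ c (lIdx k c u) := h3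
        _ ≤ c (i + 2) := hle _ _ h1 (by omega) hik
  constructor
  · intro hJ u hu
    have huC : u ∉ chainSet k c := by
      rcases hu with ⟨h, _⟩ | ⟨h, _⟩ <;> exact h
    have hl : lIdx k c u = i + 1 ∨ lIdx k c u = i + 2 := by
      rcases hu with ⟨_, h⟩ | ⟨_, h⟩ <;> [exact Or.inl h; exact Or.inr h]
    have hu2 : u ≤ c (i + 2) := hlIdx u huC hl
    have hcJ : c (i + 2) ∈ I ∪ {c (i + 1), c (i + 2)} := by
      right; right; rfl
    have := hJ _ hcJ u hu2
    rcases this with h | h | h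
    · exact h
    · exact absurd ⟨i + 1, ⟨by omega, by omega⟩, h.symm⟩ huC
    · exact absurd ⟨i + 2, ⟨by omega, by omega⟩, h.symm⟩ huC
  · intro hL u hu v hv
    rcases hu with hu | hu | hu
    · exact Or.inl (hI u hu v hv)
    · -- u = c (i+1)
      have hvc : v ≤ c (i + 2) := hv.trans (by rw [hu]; exact hle _ _ (by omega) (by omega) hik)
      by_cases hvC : v ∈ chainSet k c
      · obtain ⟨j, ⟨hj1, hjk⟩, rfl⟩ := hvC
        have hji2 : j ≤ i + 2 := by
          by_contra h
          exact absurd hvc (not_le_of_gt (hmono _ _ (by omega) (by omega) hjk))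
        rcases (by omega : j ≤ i ∨ j = i + 1 ∨ j = i + 2) with hji | rfl | rfl
        · rcases hz with ⟨rfl, _⟩ | ⟨hi1, hik', hciI, _⟩
          · omega
          · exact Or.inl (hI _ hciI _ (hle j i hj1 hji hik'))
        · right; left; rfl
        · right; right; rfl
      · have hj1 : 1 ≤ lIdx k c v := by
          by_contra h
          have hmem : leC k c v (lIdx k c v) := leC_lIdx k c _
          rcases hmem with hh | ⟨h1, _, _⟩ <;> omega
        have hjle : lIdx k c v ≤ i + 2 :=
          lIdx_le (Or.inr ⟨by omega, hik, hvc⟩)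
        rcases (by omega : lIdx k c v ≤ i ∨ lIdx k c v = i + 1 ∨ lIdx k c v = i + 2)
          with hji | hji | hji
        · have hmem : leC k c v (lIdx k c v) := leC_lIdx k c _
          rcases hmem with hh | ⟨h1, h2, h3⟩
          · omega
          rcases hz with ⟨rfl, _⟩ | ⟨hi1, hik', hciI, _⟩
          · omega
          · exact Or.inl (hI _ hciI _ (h3.trans (hle _ i h1 hji hik')))
        · exact Or.inl (hL (Or.inl ⟨hvC, hji⟩))
        · exact Or.inl (hL (Or.inr ⟨hvC, hji⟩))
    · -- u = c (i+2)
      have hvc : v ≤ c (i + 2) := hv.trans (le_of_eq hu)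
      by_cases hvC : v ∈ chainSet k c
      · obtain ⟨j, ⟨hj1, hjk⟩, rfl⟩ := hvC
        have hji2 : j ≤ i + 2 := by
          by_contra h
          exact absurd hvc (not_le_of_gt (hmono _ _ (by omega) (by omega) hjk))
        rcases (by omega : j ≤ i ∨ j = i + 1 ∨ j = i + 2) with hji | rfl | rfl
        · rcases hz with ⟨rfl, _⟩ | ⟨hi1, hik', hciI, _⟩
          · omega
          · exact Or.inl (hI _ hciI _ (hle j i hj1 hji hik'))
        · right; left; rfl
        · right; right; rfl
      · have hj1 : 1 ≤ lIdx k c v := by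
          by_contra h
          have hmem : leC k c v (lIdx k c v) := leC_lIdx k c _
          rcases hmem with hh | ⟨h1, _, _⟩ <;> omega
        have hjle : lIdx k c v ≤ i + 2 :=
          lIdx_le (Or.inr ⟨by omega, hik, hvc⟩)
        rcases (by omega : lIdx k c v ≤ i ∨ lIdx k c v = i + 1 ∨ lIdx k c v = i + 2)
          with hji | hji | hji
        · have hmem : leC k c v (lIdx k c v) := leC_lIdx k c _
          rcases hmem with hh | ⟨h1, h2, h3⟩
          · omega
          rcases hz with ⟨rfl, _⟩ | ⟨hi1, hik', hciI, _⟩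
          · omega
          · exact Or.inl (hI _ hciI _ (h3.trans (hle _ i h1 hji hik')))
        · exact Or.inl (hL (Or.inl ⟨hvC, hji⟩))
        · exact Or.inl (hL (Or.inr ⟨hvC, hji⟩))
end

section
/- Let I be an ideal of P with ζ(I) = i+2 for some i ∈ {0,…,k−2}, where C = {c_1 ≺ ⋯ ≺ c_k} is a longest chain of P. Then I \ {c_{i+1}, c_{i+2}} is an ideal of P if and only if (S_{i+1} ∪ S_{i+2}) ∩ I = ∅, where S_j = {u ∈ P \ C : s_u = j}. -/
open Finset

variable {α : Type*}

/-- `Sⱼ = { u ∈ P \ C : s_u = j }`. -/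
noncomputable def Sset [PartialOrder α] (k : ℕ) (c : ℕ → α) (j : ℕ) : Set α :=
  {u | u ∉ chainSet k c ∧ sIdx k c u = j}

lemma sIdx_spec [PartialOrder α] (k : ℕ) (c : ℕ → α) (u : α) :
    cLe k c u (sIdx k c u) := by
  have hbdd : BddAbove {i | cLe k c u i} := by
    refine ⟨k, fun x hx => ?_⟩
    rcases hx with h0 | ⟨_, h, _⟩
    · omega
    · exact h
  have hne : {i | cLe k c u i}.Nonempty := ⟨0, Or.inl rfl⟩
  exact Nat.sSup_mem hne hbdd

lemma sIdx_ge [PartialOrder α] (k : ℕ) (c : ℕ → α) (u : α) (j : ℕ)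
    (h : cLe k c u j) : j ≤ sIdx k c u := by
  have hbdd : BddAbove {i | cLe k c u i} := by
    refine ⟨k, fun x hx => ?_⟩
    rcases hx with h0 | ⟨_, h, _⟩
    · omega
    · exact h
  exact le_csSup hbdd h

/-- For an ideal `I` with `ζ(I) = i + 2`, `i ≤ k - 2`: the set `I \ {c_{i+1}, c_{i+2}}` is
an ideal of `P` iff `(S_{i+1} ∪ S_{i+2}) ∩ I = ∅`. -/
theorem stmt_9 [PartialOrder α] [Fintype α] (k : ℕ) (c : ℕ → α)
    (hC : IsLongestChain k c) (I : Set α) (hI : IsIdealSet I)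
    (i : ℕ) (hik : i + 2 ≤ k) (hz : zetaEq k c I (i + 2)) :
    IsIdealSet (I \ {c (i + 1), c (i + 2)}) ↔ (Sset k c (i + 1) ∪ Sset k c (i + 2)) ∩ I = ∅ := by
  obtain ⟨hmono, _⟩ := hC
  have hcmono : ∀ a b, 1 ≤ a → a ≤ b → b ≤ k → c a ≤ c b := by
    intro a b h1 hab hbk
    rcases eq_or_lt_of_le hab with rfl | h
    · exact le_rfl
    · exact (hmono a b h1 h hbk).le
  have hznot : ∀ j, i + 2 < j → j ≤ k → c j ∉ I := by
    rcases hz with ⟨h0, _⟩ | ⟨_, _, _, h⟩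
    · omega
    · exact h
  have hc1mem : c (i + 1) ∈ chainSet k c := ⟨i + 1, ⟨by omega, by omega⟩, rfl⟩
  have hc2mem : c (i + 2) ∈ chainSet k c := ⟨i + 2, ⟨by omega, by omega⟩, rfl⟩
  -- key: if u ∈ I and c (i+1) ≤ u and u ∉ {c(i+1), c(i+2)} then u ∈ S_{i+1} ∪ S_{i+2}
  have key : ∀ u ∈ I, c (i + 1) ≤ u → u ≠ c (i + 1) → u ≠ c (i + 2) →
      u ∈ Sset k c (i + 1) ∪ Sset k c (i + 2) := by
    intro u huI hle hne1 hne2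
    have huC : u ∉ chainSet k c := by
      rintro ⟨j, ⟨hj1, hjk⟩, rfl⟩
      have hji : i + 1 ≤ j := by
        by_contra h
        push_neg at h
        have := hmono j (i + 1) hj1 (by omega) (by omega)
        exact absurd (lt_of_le_of_lt hle this) (lt_irrefl _)
      have hj3 : i + 3 ≤ j := by
        rcases Nat.lt_or_ge j (i + 3) with h | h
        · have : j = i + 1 ∨ j = i + 2 := by omega
          rcases this with rfl | rfl
          · exact absurd rfl hne1
          · exact absurd rfl hne2
        · exact h
      exact absurd huI (hznot j (by omega) hjk)
    have hcle : cLe k c u (i + 1) := Or.inr ⟨by omega, by omega, hle⟩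
    have hs1 : i + 1 ≤ sIdx k c u := sIdx_ge k c u _ hcle
    have hs2 : sIdx k c u ≤ i + 2 := by
      by_contra h
      push_neg at h
      rcases sIdx_spec k c u with h0 | ⟨_, hsk, hcsu⟩
      · omega
      · exact absurd (hI u huI _ hcsu) (hznot _ h hsk)
    rcases eq_or_lt_of_le hs2 with he | hlt
    · exact Or.inr ⟨huC, he⟩
    · exact Or.inl ⟨huC, by omega⟩
  constructor
  · intro hid
    ext u
    simp only [Set.mem_inter_iff, Set.mem_empty_iff_false, iff_false]
    rintro ⟨huS, huI⟩
    have huC : u ∉ chainSet k c := by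
      rcases huS with ⟨h, _⟩ | ⟨h, _⟩ <;> exact h
    have hle : c (i + 1) ≤ u := by
      rcases huS with ⟨_, hs⟩ | ⟨_, hs⟩ <;>
      · rcases (hs ▸ sIdx_spec k c u : cLe k c u _) with h0 | ⟨_, _, h⟩
        · omega
        · first
          | exact h
          | exact le_trans (hcmono (i + 1) (i + 2) (by omega) (by omega) (by omega)) h
    have huI' : u ∈ I \ {c (i + 1), c (i + 2)} := by
      refine ⟨huI, ?_⟩
      rintro (rfl | rfl) <;> [exact huC hc1mem; exact huC hc2mem]
    have := hid u huI' (c (i + 1)) hle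
    exact this.2 (Or.inl rfl)
  · intro hemp
    intro u hu v hv
    obtain ⟨huI, huNot⟩ := hu
    have hvI : v ∈ I := hI u huI v hv
    refine ⟨hvI, ?_⟩
    rintro (h | h)
    · subst h
      have hle : c (i + 1) ≤ u := hv
      have hne1 : u ≠ c (i + 1) := fun h => huNot (Or.inl h)
      have hne2 : u ≠ c (i + 2) := fun h => huNot (Or.inr h)
      have := key u huI hle hne1 hne2
      have : u ∈ (Sset k c (i + 1) ∪ Sset k c (i + 2)) ∩ I := ⟨this, huI⟩
      rw [hemp] at this
      exact this
    · subst h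
      have hle : c (i + 1) ≤ u :=
        le_trans (hcmono (i + 1) (i + 2) (by omega) (by omega) (by omega)) hv
      have hne1 : u ≠ c (i + 1) := fun h => huNot (Or.inl h)
      have hne2 : u ≠ c (i + 2) := fun h => huNot (Or.inr h)
      have := key u huI hle hne1 hne2
      have : u ∈ (Sset k c (i + 1) ∪ Sset k c (i + 2)) ∩ I := ⟨this, huI⟩
      rw [hemp] at this
      exact this
end

section
/- For all positive integers a_1,…,a_g and b_1,…,b_f, it holds that 48·Σ_{j=1}^g j·(C(a_j,3)+1) + 48·Σ_{j=1}^f j·(C(b_j,3)+1) ≥ (Σ_{j=1}^g a_j)·(Σ_{j=1}^f b_j), where C(m,3) = m(m−1)(m−2)/6 denotes the binomial coefficient. -/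
open Finset

private lemma two_choose2 (n : ℕ) : 2 * Nat.choose (n+2) 2 = (n+1)*(n+2) := by
  induction n with
  | zero => decide
  | succ m ih =>
    have h : Nat.choose (m+3) 2 = Nat.choose (m+2) 1 + Nat.choose (m+2) 2 :=
      Nat.choose_succ_succ (m+2) 1
    rw [h, Nat.choose_one_right]
    ring_nf
    ring_nf at ih
    omega

private lemma six_choose3 (n : ℕ) : 6 * Nat.choose (n+3) 3 = (n+1)*(n+2)*(n+3) := by
  induction n with
  | zero => decide
  | succ m ih =>
    have h : Nat.choose (m+4) 3 = Nat.choose (m+3) 2 + Nat.choose (m+3) 3 :=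
      Nat.choose_succ_succ (m+3) 2
    have h2 := two_choose2 (m+1)
    have : 6 * Nat.choose (m+4) 3 = 3 * (2 * Nat.choose (m+3) 2) + 6 * Nat.choose (m+3) 3 := by
      rw [h]; ring
    rw [this, h2, ih]
    ring

private lemma cube_le_choose (n : ℕ) : n^3 ≤ 24 * (Nat.choose n 3 + 1) := by
  match n with
  | 0 => decide
  | 1 => decide
  | 2 => decide
  | (m+3) =>
    have h := six_choose3 m
    have : 24 * (Nat.choose (m+3) 3 + 1) = 4 * (6 * Nat.choose (m+3) 3) + 24 := by ring
    rw [this, h]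
    nlinarith [sq_nonneg m, m.zero_le]

private lemma step_int (g A a : ℤ) (hg : 1 ≤ g) (hA : g ≤ A) (ha : 1 ≤ a) :
    g*(A+a)^3 ≤ (g+1)*A^3 + 4*g*(g+1)^2*a^3 := by
  have hag : (0:ℤ) < a * g := mul_pos (by linarith) (by linarith)
  have hAag : (0:ℤ) ≤ A + a*g := by linarith
  have hA0 : (0:ℤ) ≤ A := by linarith
  rcases le_or_gt (3*A) (8*a*g + 3*a) with h | h
  · nlinarith [mul_nonneg (sq_nonneg (A - 2*a*g)) hAag,
      mul_nonneg (mul_nonneg (le_of_lt hag) (by positivity : (0:ℤ) ≤ a^2)) (by linarith : (0:ℤ) ≤ 8*a*g + 3*a - 3*A)]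
  · have ht : (0:ℤ) ≤ 3*A - 8*a*g - 3*a := by linarith
    rcases lt_or_ge g 3 with h3 | h3
    · interval_cases g
      · nlinarith [mul_nonneg (sq_nonneg (A - 2*a)) (by linarith : (0:ℤ) ≤ A + a),
          mul_nonneg (mul_nonneg ht (by linarith : (0:ℤ) ≤ a)) (by linarith : (0:ℤ) ≤ A + a),
          mul_nonneg (mul_nonneg (by linarith : (0:ℤ) ≤ a) (by linarith : (0:ℤ) ≤ a)) (by linarith : (0:ℤ) ≤ a)]
      · nlinarith [mul_nonneg (sq_nonneg (A - 4*a)) (by linarith : (0:ℤ) ≤ A + 2*a),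
          mul_nonneg (mul_nonneg ht (by linarith : (0:ℤ) ≤ a)) (by linarith : (0:ℤ) ≤ A + 2*a),
          mul_nonneg (mul_nonneg (by linarith : (0:ℤ) ≤ a) (by linarith : (0:ℤ) ≤ a)) (by linarith : (0:ℤ) ≤ a)]
    · have h1 : (0:ℤ) ≤ (3*A - 8*a*g - 3*a)^2 * (A + a*g) := mul_nonneg (sq_nonneg _) hAag
      have h2 : (0:ℤ) ≤ (3*A - 8*a*g - 3*a) * a * (2*g+3) * (A + a*g) := by
        apply mul_nonneg; apply mul_nonneg; apply mul_nonneg ht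
        · linarith
        · linarith
        · exact hAag
      have h3' : (0:ℤ) ≤ a^2 * A * (4*g^2 - 15*g + 9) := by
        apply mul_nonneg (mul_nonneg (by positivity) hA0); nlinarith
      have h4 : (0:ℤ) ≤ a^3*g^3 := by positivity
      have h5 : (0:ℤ) ≤ a^3*g^2 := by positivity
      have h6 : (0:ℤ) ≤ a^3*g := by positivity
      nlinarith [h1, h2, h3', h4, h5, h6]

private lemma sum_ge_card (g : ℕ) (a : ℕ → ℕ) (ha : ∀ j ∈ Finset.Icc 1 g, 1 ≤ a j) :
    g ≤ ∑ i ∈ Finset.Icc 1 g, a i := by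
  calc g = ∑ i ∈ Finset.Icc 1 g, 1 := by simp [Nat.card_Icc]
  _ ≤ ∑ i ∈ Finset.Icc 1 g, a i := Finset.sum_le_sum ha

private lemma holder (g : ℕ) (hg : 1 ≤ g) (a : ℕ → ℕ)
    (ha : ∀ j ∈ Finset.Icc 1 g, 1 ≤ a j) :
    (∑ i ∈ Finset.Icc 1 g, a i)^3 ≤ 4 * g * ∑ i ∈ Finset.Icc 1 g, i * (a i)^3 := by
  induction g, hg using Nat.le_induction with
  | base =>
    simp only [Finset.Icc_self, Finset.sum_singleton]
    have h := ha 1 (by simp)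
    linarith [Nat.zero_le ((a 1)^3)]
  | succ n hn ih =>
    have hsub : ∀ j ∈ Finset.Icc 1 n, 1 ≤ a j := fun j hj => by
      refine ha j ?_; simp at hj ⊢; omega
    set A := ∑ i ∈ Finset.Icc 1 n, a i with hA
    set T := ∑ i ∈ Finset.Icc 1 n, i * (a i)^3 with hT
    have hIH : A^3 ≤ 4 * n * T := ih hsub
    have hAn : n ≤ A := sum_ge_card n a hsub
    have hx : 1 ≤ a (n+1) := ha (n+1) (by simp)
    rw [Finset.sum_Icc_succ_top (by omega : 1 ≤ n + 1),
        Finset.sum_Icc_succ_top (by omega : 1 ≤ n + 1)]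
    set x := a (n+1) with hxdef
    -- goal : (A + x)^3 ≤ 4 * (n+1) * (T + (n+1) * x^3)
    have key : (n:ℤ) * ((A:ℤ) + x)^3 ≤ ((n:ℤ)+1) * (A:ℤ)^3 + 4*(n:ℤ)*((n:ℤ)+1)^2*(x:ℤ)^3 :=
      step_int n A x (by exact_mod_cast hn) (by exact_mod_cast hAn) (by exact_mod_cast hx)
    have hIH' : ((n:ℤ)+1) * (A:ℤ)^3 ≤ ((n:ℤ)+1) * (4 * n * T) := by
      have : ((A:ℤ))^3 ≤ 4 * (n:ℤ) * (T:ℤ) := by exact_mod_cast hIH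
      nlinarith [this]
    have main : (n:ℤ) * ((A:ℤ) + x)^3 ≤ (n:ℤ) * (4 * ((n:ℤ)+1) * ((T:ℤ) + ((n:ℤ)+1) * (x:ℤ)^3)) := by
      nlinarith [key, hIH']
    have hn0 : 0 < (n:ℤ) := by exact_mod_cast hn
    have := le_of_mul_le_mul_left (main) hn0
    have goal_int : ((A:ℤ) + x)^3 ≤ 4 * ((n:ℤ)+1) * ((T:ℤ) + ((n:ℤ)+1) * (x:ℤ)^3) := this
    exact_mod_cast goal_int

private lemma sq_le_96 (g : ℕ) (hg : 1 ≤ g) (a : ℕ → ℕ)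
    (ha : ∀ j ∈ Finset.Icc 1 g, 1 ≤ a j) :
    (∑ i ∈ Finset.Icc 1 g, a i)^2 ≤ 96 * ∑ j ∈ Finset.Icc 1 g, j * (Nat.choose (a j) 3 + 1) := by
  set A := ∑ i ∈ Finset.Icc 1 g, a i with hA
  have h1 : A^3 ≤ 4 * g * ∑ i ∈ Finset.Icc 1 g, i * (a i)^3 := holder g hg a ha
  have hAg : g ≤ A := sum_ge_card g a ha
  have h2 : g * A^2 ≤ A^3 := by nlinarith [hAg]
  have h3 : g * A^2 ≤ g * (4 * ∑ i ∈ Finset.Icc 1 g, i * (a i)^3) := by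
    calc g * A^2 ≤ A^3 := h2
    _ ≤ 4 * g * ∑ i ∈ Finset.Icc 1 g, i * (a i)^3 := h1
    _ = g * (4 * ∑ i ∈ Finset.Icc 1 g, i * (a i)^3) := by ring
  have h4 : A^2 ≤ 4 * ∑ i ∈ Finset.Icc 1 g, i * (a i)^3 :=
    Nat.le_of_mul_le_mul_left h3 (by omega)
  calc A^2 ≤ 4 * ∑ i ∈ Finset.Icc 1 g, i * (a i)^3 := h4
  _ = ∑ i ∈ Finset.Icc 1 g, 4 * (i * (a i)^3) := by rw [Finset.mul_sum]
  _ ≤ ∑ i ∈ Finset.Icc 1 g, 96 * (i * (Nat.choose (a i) 3 + 1)) := by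
      apply Finset.sum_le_sum
      intro i hi
      have := cube_le_choose (a i)
      calc 4 * (i * (a i)^3) = i * (4 * (a i)^3) := by ring
      _ ≤ i * (4 * (24 * (Nat.choose (a i) 3 + 1))) := by
          apply Nat.mul_le_mul_left; omega
      _ = 96 * (i * (Nat.choose (a i) 3 + 1)) := by ring
  _ = 96 * ∑ j ∈ Finset.Icc 1 g, j * (Nat.choose (a j) 3 + 1) := by rw [Finset.mul_sum]

/-- For positive integers `a₁, …, a_g` and `b₁, …, b_f`:
`48·Σⱼ j·(C(aⱼ,3)+1) + 48·Σⱼ j·(C(bⱼ,3)+1) ≥ (Σⱼ aⱼ)·(Σⱼ bⱼ)`. -/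
theorem stmt_10 (g f : ℕ) (hg : 1 ≤ g) (hf : 1 ≤ f) (a b : ℕ → ℕ)
    (ha : ∀ j ∈ Finset.Icc 1 g, 1 ≤ a j) (hb : ∀ j ∈ Finset.Icc 1 f, 1 ≤ b j) :
    48 * ∑ j ∈ Finset.Icc 1 g, j * (Nat.choose (a j) 3 + 1) +
      48 * ∑ j ∈ Finset.Icc 1 f, j * (Nat.choose (b j) 3 + 1) ≥
      (∑ j ∈ Finset.Icc 1 g, a j) * (∑ j ∈ Finset.Icc 1 f, b j) := by
  have hA := sq_le_96 g hg a ha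
  have hB := sq_le_96 f hf b hb
  set A := ∑ j ∈ Finset.Icc 1 g, a j
  set B := ∑ j ∈ Finset.Icc 1 f, b j
  have h2 : 2 * (A * B) ≤ A^2 + B^2 := by
    zify
    nlinarith [sq_nonneg ((A:ℤ) - (B:ℤ))]
  omega
end

section
/- For positive integers a_1,…,a_g, it holds that Σ_{j=1}^g j·a_j³ ≥ (1/4)·(Σ_{j=1}^g a_j)³ / g. More precisely, Σ_{j=1}^g j·a_j³ ≥ (Σ_{j=1}^g a_j)³ / (Σ_{j=1}^g 1/√j)², and since Σ_{j=1}^g 1/√j ≤ 2√g and Σ a_j ≥ g, one has Σ_{j=1}^g j·a_j³ ≥ (1/4)·(Σ_{j=1}^g a_j)². -/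
/-!
Apply Jensen's inequality for the convex function `x ↦ x³` with weights proportional to `1/√j`
at the points `√j · aⱼ`; this is Radon's inequality `(Σ aⱼ)³ / (Σ bⱼ)² ≤ Σ aⱼ³ / bⱼ²` with
`bⱼ = 1/√j`. The sum `Σ_{j ≤ g} 1/√j` telescopes against `2√j - 2√(j-1) ≥ 1/√j`, so it is at most
`2√g`, and `Σ aⱼ ≥ g` turns the cube into a square.
-/

open Finset

theorem Finset.pow_sum_div_pow_sum_le_sum_pow_div_pow {ι : Type*} (s : Finset ι) {f g : ι → ℝ}
    (hf : ∀ i ∈ s, 0 ≤ f i) (hg : ∀ i ∈ s, 0 < g i) (n : ℕ) :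
    (∑ i ∈ s, f i) ^ (n + 1) / (∑ i ∈ s, g i) ^ n ≤ ∑ i ∈ s, f i ^ (n + 1) / g i ^ n := by
  obtain rfl | hs := s.eq_empty_or_nonempty
  · simp
  set G := ∑ i ∈ s, g i
  have hG : 0 < G := sum_pos hg hs
  have jensen := Real.pow_arith_mean_le_arith_mean_pow s (fun i ↦ g i / G) (fun i ↦ f i / g i)
    (fun i hi ↦ (div_pos (hg i hi) hG).le) (by rw [← sum_div, div_self hG.ne'])
    (fun i hi ↦ div_nonneg (hf i hi) (hg i hi).le) (n + 1)
  have mean : ∑ i ∈ s, g i / G * (f i / g i) = (∑ i ∈ s, f i) / G := by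
    rw [sum_div]
    exact sum_congr rfl fun i hi ↦ by field_simp [(hg i hi).ne']
  have pow_mean : ∑ i ∈ s, g i / G * (f i / g i) ^ (n + 1) =
      (∑ i ∈ s, f i ^ (n + 1) / g i ^ n) / G := by
    rw [sum_div]
    refine sum_congr rfl fun i hi ↦ ?_
    rw [div_pow, pow_succ (g i)]
    field_simp [(hg i hi).ne']
  rw [mean, pow_mean, div_pow, div_le_div_iff₀ (by positivity) hG, pow_succ G,
    ← mul_assoc] at jensen
  rw [div_le_iff₀ (by positivity)]
  exact le_of_mul_le_mul_right jensen hG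

theorem Real.one_div_sqrt_add_one_le (x : ℝ) (hx : 0 ≤ x) :
    1 / √(x + 1) ≤ 2 * (√(x + 1) - √x) := by
  have hpos : 0 < √(x + 1) := Real.sqrt_pos.2 (by linarith)
  have hle : √x ≤ √(x + 1) := Real.sqrt_le_sqrt (by linarith)
  rw [div_le_iff₀ hpos]
  nlinarith [Real.sq_sqrt hx, Real.sq_sqrt (by linarith : 0 ≤ x + 1), sq_nonneg (√(x + 1) - √x)]

theorem sum_Icc_one_div_sqrt_le (n : ℕ) : ∑ j ∈ Icc 1 n, 1 / √(j : ℝ) ≤ 2 * √(n : ℝ) := by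
  induction n with
  | zero => simp
  | succ n ih =>
    rw [sum_Icc_succ_top (by omega), Nat.cast_succ]
    linarith [Real.one_div_sqrt_add_one_le n n.cast_nonneg]

/-- For positive integers `a₁, …, a_g`:
`Σⱼ j·aⱼ³ ≥ (Σⱼ aⱼ)³ / (Σⱼ 1/√j)²`, hence `Σⱼ j·aⱼ³ ≥ (1/4)·(Σⱼ aⱼ)³ / g`,
and (using `Σ aⱼ ≥ g`) `Σⱼ j·aⱼ³ ≥ (1/4)·(Σⱼ aⱼ)²`. -/
theorem stmt_11 (g : ℕ) (hg : 1 ≤ g) (a : ℕ → ℕ) (ha : ∀ j ∈ Finset.Icc 1 g, 1 ≤ a j) :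
    ((∑ j ∈ Finset.Icc 1 g, (j : ℝ) * (a j : ℝ) ^ 3) ≥
        (∑ j ∈ Finset.Icc 1 g, (a j : ℝ)) ^ 3 /
          (∑ j ∈ Finset.Icc 1 g, 1 / Real.sqrt j) ^ 2) ∧
    ((∑ j ∈ Finset.Icc 1 g, (j : ℝ) * (a j : ℝ) ^ 3) ≥
        (1 / 4) * (∑ j ∈ Finset.Icc 1 g, (a j : ℝ)) ^ 3 / g) ∧
    ((∑ j ∈ Finset.Icc 1 g, (j : ℝ) * (a j : ℝ) ^ 3) ≥
        (1 / 4) * (∑ j ∈ Finset.Icc 1 g, (a j : ℝ)) ^ 2) := by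
  set A := ∑ j ∈ Icc 1 g, (j : ℝ) * (a j : ℝ) ^ 3
  set B := ∑ j ∈ Icc 1 g, 1 / √(j : ℝ)
  set T := ∑ j ∈ Icc 1 g, (a j : ℝ)
  have hpos : ∀ j ∈ Icc 1 g, 0 < 1 / √(j : ℝ) := fun j hj ↦ by
    have : 1 ≤ j := (mem_Icc.1 hj).1
    positivity
  have radon : T ^ 3 / B ^ 2 ≤ A := by
    convert (Icc 1 g).pow_sum_div_pow_sum_le_sum_pow_div_pow (fun j _ ↦ (a j).cast_nonneg) hpos 2
      using 2 with j
    rw [div_pow, Real.sq_sqrt j.cast_nonneg]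
    field_simp
  have hg' : (0 : ℝ) < g := by exact_mod_cast hg
  have hB : 0 < B := sum_pos hpos ⟨1, mem_Icc.2 ⟨le_rfl, hg⟩⟩
  have hB_sq : B ^ 2 ≤ 4 * g := by
    nlinarith [sum_Icc_one_div_sqrt_le g, Real.sq_sqrt hg'.le, Real.sqrt_nonneg (g : ℝ)]
  have hT : (g : ℝ) ≤ T := by
    simpa using sum_le_sum fun j hj ↦ (Nat.one_le_cast.2 (ha j hj) : (1 : ℝ) ≤ a j)
  have cube : 1 / 4 * T ^ 3 / g ≤ A := calc
    1 / 4 * T ^ 3 / g = T ^ 3 / (4 * g) := by ring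
    _ ≤ T ^ 3 / B ^ 2 := div_le_div_of_nonneg_left (by positivity) (by positivity) hB_sq
    _ ≤ A := radon
  refine ⟨radon, cube, le_trans ?_ cube⟩
  rw [le_div_iff₀ hg']
  nlinarith [sq_nonneg T]
end

section
/- Let 𝓐 be a recursive algorithm modeled by a finite rooted tree whose nodes X carry a positive cost T(X) and a set of directly visited elements X', with children set C(X), such that each node's element set satisfies |X| = |X'| + Σ_{Y ∈ C(X)} |Y|. Suppose there are a potential Φ : nodes → ℝ_{>0}, constants μ > 0 and T* > 0, such that for every node X: Σ_{Y ∈ C(X)} Φ(Y) + μ|X'| − Φ(X) ≥ T(X)/T* (the Pyramid condition). Then for every node X, the total cost of the subtree rooted at X is at most T*·(μ|X| − Φ(X)). -/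
open Finset

/-- The Pyramid condition bounds subtree costs: if a recursive algorithm, modeled by a
finite rooted tree (nodes of type `ι`, children given by `children`, well-foundedness
witnessed by a rank function), with positive costs `T`, sizes satisfying
`|X| = |X'| + Σ_{Y ∈ C(X)} |Y|`, positive potential `Φ` and constants `μ, T* > 0`
satisfies `Σ_{Y ∈ C(X)} Φ(Y) + μ|X'| − Φ(X) ≥ T(X)/T*` at every node, then the total cost
of the subtree rooted at any node `X` is at most `T*·(μ|X| − Φ(X))`. -/
theorem stmt_14 {ι : Type*} (children : ι → Finset ι) (T Φ : ι → ℝ)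
    (size size' : ι → ℕ) (μ Tstar : ℝ)
    (hT : ∀ X, 0 < T X) (hΦ : ∀ X, 0 < Φ X) (hμ : 0 < μ) (hTs : 0 < Tstar)
    (rank : ι → ℕ) (hrank : ∀ X, ∀ Y ∈ children X, rank Y < rank X)
    (hsize : ∀ X, (size X : ℝ) = (size' X : ℝ) + ∑ Y ∈ children X, (size Y : ℝ))
    (pyramid : ∀ X, (∑ Y ∈ children X, Φ Y) + μ * (size' X : ℝ) - Φ X ≥ T X / Tstar)
    (subCost : ι → ℝ)
    (hsub : ∀ X, subCost X = T X + ∑ Y ∈ children X, subCost Y) :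
    ∀ X, subCost X ≤ Tstar * (μ * (size X : ℝ) - Φ X) := by
  intro X
  induction X using Nat.strongRecMeasure rank with
  | _ X ih =>
  have hTX : T X ≤ Tstar * ((∑ Y ∈ children X, Φ Y) + μ * (size' X : ℝ) - Φ X) := by
    have := pyramid X
    rw [ge_iff_le, div_le_iff₀ hTs] at this
    linarith [mul_comm ((∑ Y ∈ children X, Φ Y) + μ * (size' X : ℝ) - Φ X) Tstar ▸ this]
  have hsum : ∑ Y ∈ children X, subCost Y ≤
      ∑ Y ∈ children X, Tstar * (μ * (size Y : ℝ) - Φ Y) :=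
    Finset.sum_le_sum fun Y hY => ih Y (hrank X Y hY)
  rw [hsub X]
  have h1 := hsize X
  calc T X + ∑ Y ∈ children X, subCost Y
      ≤ Tstar * ((∑ Y ∈ children X, Φ Y) + μ * (size' X : ℝ) - Φ X)
        + ∑ Y ∈ children X, Tstar * (μ * (size Y : ℝ) - Φ Y) := by linarith
    _ = Tstar * (μ * (size X : ℝ) - Φ X) := by
        rw [h1, ← Finset.mul_sum, Finset.sum_sub_distrib, ← Finset.mul_sum]
        ring
end

section
/- Suppose a recursive algorithm satisfies the Push-out condition with time T*: there are constants α > 1 and β ≥ 0 with Σ_{Y ∈ C(X)} T(Y) ≥ α·T(X) − β·(|C(X)|+1)·T* for all iterations X, and every internal node of the recursion tree has at least two children. Then the algorithm satisfies the Pyramid condition with time T* for the potential Φ(X) = T(X)/((α−1)T*) + 3β/(α−1); that is, Σ_{Y ∈ C(X)} Φ(Y) + μ|X'| − Φ(X) ≥ T(X)/T* for every node X (even with μ|X'| omitted, i.e. Σ_{Y ∈ C(X)} Φ(Y) − Φ(X) ≥ T(X)/T*). -/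
open Finset

/-- The potential `Φ(X) = T(X)/((α−1)T*) + 3β/(α−1)` used to show that the Push-out
condition implies the Pyramid condition. -/
noncomputable def pushPotential {ι : Type*} (T : ι → ℝ) (Tstar a b : ℝ) (X : ι) : ℝ :=
  T X / ((a - 1) * Tstar) + 3 * b / (a - 1)

/-
The potential is affine in the cost, so at an internal node with `k ≥ 2` children the Push-out
inequality, divided by `(α − 1) T*`, gives `Σ Φ(Y) − Φ(X) − T(X)/T* ≥ β (2k − 4)/(α − 1) ≥ 0`:
the constant `3β/(α − 1)` in `Φ` is chosen so that its `k − 1` surplus copies absorb the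
`β(k + 1)T*` slack of the Push-out condition.
At a leaf the Push-out condition reads `α T(X) ≤ β T*`, which bounds `Φ(X) + T(X)/T*` by
`4β/(α − 1)`, so any `μ > 4β/(α − 1)` pays for the leaves.
-/

section PushPotential

variable {ι : Type*} {T : ι → ℝ} {Tstar a b : ℝ}

theorem sum_pushPotential (s : Finset ι) :
    ∑ Y ∈ s, pushPotential T Tstar a b Y =
      (∑ Y ∈ s, T Y) / ((a - 1) * Tstar) + s.card * (3 * b / (a - 1)) := by
  simp only [pushPotential, sum_add_distrib, sum_div, sum_const, nsmul_eq_mul]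

theorem div_le_sum_pushPotential_sub (hTs : 0 < Tstar) (ha : 1 < a) (hb : 0 ≤ b)
    {X : ι} {s : Finset ι} (hs : 2 ≤ s.card)
    (hpush : a * T X - b * ((s.card : ℝ) + 1) * Tstar ≤ ∑ Y ∈ s, T Y) :
    T X / Tstar ≤ ∑ Y ∈ s, pushPotential T Tstar a b Y - pushPotential T Tstar a b X := by
  have ha1 : 0 < a - 1 := by linarith
  have hk : (2 : ℝ) ≤ s.card := by exact_mod_cast hs
  have hslack : 0 ≤ b * Tstar * (2 * s.card - 4) := by
    have := mul_nonneg hb hTs.le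
    nlinarith
  have hgap : ∑ Y ∈ s, pushPotential T Tstar a b Y - pushPotential T Tstar a b X - T X / Tstar =
      ((∑ Y ∈ s, T Y) - (a * T X - b * ((s.card : ℝ) + 1) * Tstar)
        + b * Tstar * (2 * s.card - 4)) / ((a - 1) * Tstar) := by
    rw [sum_pushPotential, pushPotential]
    field_simp
    ring
  have : 0 ≤ ∑ Y ∈ s, pushPotential T Tstar a b Y - pushPotential T Tstar a b X - T X / Tstar := by
    rw [hgap]
    exact div_nonneg (by linarith) (by positivity)
  linarith

theorem div_add_pushPotential_le (hTs : 0 < Tstar) (ha : 1 < a) {X : ι}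
    (hpush : a * T X ≤ b * Tstar) :
    T X / Tstar + pushPotential T Tstar a b X ≤ 4 * b / (a - 1) := by
  have ha1 : 0 < a - 1 := by linarith
  have hsplit : T X / Tstar + pushPotential T Tstar a b X =
      a * T X / ((a - 1) * Tstar) + 3 * b / (a - 1) := by
    rw [pushPotential]
    field_simp
    ring
  have hlead : a * T X / ((a - 1) * Tstar) ≤ b / (a - 1) := by
    rw [div_le_div_iff₀ (by positivity) ha1]
    nlinarith
  rw [hsplit]
  linarith [show b / (a - 1) + 3 * b / (a - 1) = 4 * b / (a - 1) by ring]

end PushPotential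

theorem stmt_15_general {ι : Type*} (children : ι → Finset ι) (T : ι → ℝ) (size' : ι → ℕ)
    (Tstar a b : ℝ) (hTs : 0 < Tstar) (ha : 1 < a) (hb : 0 ≤ b)
    (htwo : ∀ X, children X ≠ ∅ → 2 ≤ (children X).card)
    (hleaf : ∀ X, children X = ∅ → 1 ≤ size' X)
    (pushout : ∀ X, (∑ Y ∈ children X, T Y) ≥
      a * T X - b * (((children X).card : ℝ) + 1) * Tstar) :
    ∃ μ : ℝ, 0 < μ ∧
      (∀ X, (∑ Y ∈ children X, pushPotential T Tstar a b Y) + μ * (size' X : ℝ) -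
          pushPotential T Tstar a b X ≥ T X / Tstar) ∧
      (∀ X, children X ≠ ∅ →
        (∑ Y ∈ children X, pushPotential T Tstar a b Y) - pushPotential T Tstar a b X ≥
          T X / Tstar) := by
  have internal : ∀ X, children X ≠ ∅ →
      (∑ Y ∈ children X, pushPotential T Tstar a b Y) - pushPotential T Tstar a b X ≥
        T X / Tstar := fun X hX =>
    div_le_sum_pushPotential_sub hTs ha hb (htwo X hX) (pushout X)
  have hμ : 0 < 4 * b / (a - 1) + 1 := by
    have : 0 < a - 1 := by linarith
    positivity
  refine ⟨4 * b / (a - 1) + 1, hμ, fun X => ?_, internal⟩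
  by_cases hX : children X = ∅
  · have hsize : (1 : ℝ) ≤ size' X := by exact_mod_cast hleaf X hX
    have hleafPush : a * T X ≤ b * Tstar := by simpa [hX] using pushout X
    have hpay := div_add_pushPotential_le hTs ha hleafPush
    rw [hX, sum_empty]
    nlinarith
  · have := internal X hX
    have : 0 ≤ (4 * b / (a - 1) + 1) * (size' X : ℝ) := by positivity
    linarith

/-- If an algorithm satisfies Uno's Push-out condition with time `T*` (constants `α > 1`,
`β ≥ 0`, and every internal node has at least two children; leaves directly visit an
element), then it satisfies the Pyramid condition with time `T*` for the potential
`Φ(X) = T(X)/((α−1)T*) + 3β/(α−1)`; moreover at internal nodes the inequality holds even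
with the term `μ|X'|` omitted. -/
theorem stmt_15 {ι : Type*} (children : ι → Finset ι) (T : ι → ℝ) (size' : ι → ℕ)
    (Tstar a b : ℝ) (hT : ∀ X, 0 < T X) (hTs : 0 < Tstar) (ha : 1 < a) (hb : 0 ≤ b)
    (htwo : ∀ X, children X ≠ ∅ → 2 ≤ (children X).card)
    (hleaf : ∀ X, children X = ∅ → 1 ≤ size' X)
    (pushout : ∀ X, (∑ Y ∈ children X, T Y) ≥
      a * T X - b * (((children X).card : ℝ) + 1) * Tstar) :
    ∃ μ : ℝ, 0 < μ ∧
      (∀ X, (∑ Y ∈ children X, pushPotential T Tstar a b Y) + μ * (size' X : ℝ) -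
          pushPotential T Tstar a b X ≥ T X / Tstar) ∧
      (∀ X, children X ≠ ∅ →
        (∑ Y ∈ children X, pushPotential T Tstar a b Y) - pushPotential T Tstar a b X ≥
          T X / Tstar) :=
  stmt_15_general children T size' Tstar a b hTs ha hb htwo hleaf pushout
end

section
/- For every non-empty finite poset P, the flip graph 𝓕³(P) on the antichains of P, in which two antichains are adjacent when their symmetric difference has size at most 3, contains a Hamiltonian path from some antichain of size 1 to the empty antichain. -/
/-!
Fix any element `c`. The antichains containing `c` are exactly `insert c B` for the antichains
`B` of the elements incomparable to `c`, and inserting `c` does not change symmetric differences;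
the antichains avoiding `c` are those of `P \ {c}`. By induction both smaller posets have
Hamiltonian paths from a set of size at most one down to `∅`. Running the first one backwards
with `c` inserted (from `{c}` to a set of size at most two) and then the second one gives the
path, the junction costing at most `2 + 1 = 3` flips.
-/

open Finset
open scoped symmDiff

theorem Finset.insert_symmDiff_insert_subset {α : Type*} [DecidableEq α] (c : α)
    (A B : Finset α) : insert c A ∆ insert c B ⊆ A ∆ B := by
  intro x
  simp only [mem_symmDiff, mem_insert]
  tauto

section FlipPath

variable {α : Type*} [PartialOrder α] [DecidableEq α]

/-- Antichains of `P` are encoded as antichains of `α` contained in `s`, so that the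
induction on `P` runs over subsets `s` of a fixed type instead of over subtypes. -/
structure IsFlipPath (s : Finset α) (L : List (Finset α)) : Prop where
  nodup : L.Nodup
  mem_iff : ∀ A, A ∈ L ↔ A ⊆ s ∧ IsAntichain (· ≤ ·) (A : Set α)
  isChain : L.IsChain fun A B => #(A ∆ B) ≤ 3
  card_le_one_of_mem_head? : ∀ A ∈ L.head?, #A ≤ 1
  getLast? : L.getLast? = some ∅

theorem isFlipPath_empty : IsFlipPath (∅ : Finset α) [∅] where
  nodup := List.nodup_singleton _
  mem_iff A := by simp only [List.mem_singleton, subset_empty, iff_self_and]; rintro rfl; simp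
  isChain := List.isChain_singleton _
  card_le_one_of_mem_head? := by simp
  getLast? := rfl

theorem subset_and_isAntichain_insert_iff {s B : Finset α} {c : α} (hc : c ∈ s) (hcB : c ∉ B)
    [DecidablePred (IncompRel (· ≤ ·) c)] :
    (B ⊆ {x ∈ s | IncompRel (· ≤ ·) c x} ∧ IsAntichain (· ≤ ·) (B : Set α)) ↔
      insert c B ⊆ s ∧ IsAntichain (· ≤ ·) ((insert c B : Finset α) : Set α) := by
  rw [insert_subset_iff]
  simp only [coe_insert, isAntichain_insert, subset_iff, mem_filter, mem_coe]
  constructor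
  · rintro ⟨hBs, hB⟩
    exact ⟨⟨hc, fun b hb => (hBs hb).1⟩, hB, fun b hb _ => (hBs hb).2⟩
  · rintro ⟨⟨-, hBs⟩, hB, hinc⟩
    exact ⟨fun b hb => ⟨hBs hb, hinc hb (ne_of_mem_of_not_mem hb hcB).symm⟩, hB⟩

section Step

variable {s t : Finset α} {c : α} {L₁ L₂ : List (Finset α)}

theorem IsFlipPath.head?_reverse_map_insert_append (h₁ : IsFlipPath t L₁)
    (L₂ : List (Finset α)) :
    (L₁.reverse.map (insert c) ++ L₂).head? = some {c} := by
  simp [List.head?_append, h₁.getLast?]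

variable [DecidablePred (IncompRel (· ≤ ·) c)]

theorem IsFlipPath.notMem_of_mem (h₁ : IsFlipPath {x ∈ s | IncompRel (· ≤ ·) c x} L₁)
    {B : Finset α} (hB : B ∈ L₁) : c ∉ B :=
  fun hcB => (mem_filter.1 (((h₁.mem_iff B).1 hB).1 hcB)).2.ne rfl

theorem IsFlipPath.reverse_map_insert_append (hc : c ∈ s)
    (h₁ : IsFlipPath {x ∈ s | IncompRel (· ≤ ·) c x} L₁)
    (h₂ : IsFlipPath (s.erase c) L₂) :
    IsFlipPath s (L₁.reverse.map (insert c) ++ L₂) where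
  nodup := by
    refine ((List.nodup_reverse.2 h₁.nodup).map_on fun A hA B hB hAB => ?_).append
      h₂.nodup ?_
    · rw [List.mem_reverse] at hA hB
      rw [← erase_insert (h₁.notMem_of_mem hA), hAB, erase_insert (h₁.notMem_of_mem hB)]
    · rintro _ hA hA₂
      obtain ⟨B, -, rfl⟩ := List.mem_map.1 hA
      exact (subset_erase.1 ((h₂.mem_iff _).1 hA₂).1).2 (mem_insert_self c B)
  mem_iff A := by
    simp only [List.mem_append, List.mem_map, List.mem_reverse]
    constructor
    · rintro (⟨B, hB, rfl⟩ | hA)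
      · exact (subset_and_isAntichain_insert_iff hc (h₁.notMem_of_mem hB)).1
          ((h₁.mem_iff B).1 hB)
      · obtain ⟨hAs, hA⟩ := (h₂.mem_iff A).1 hA
        exact ⟨(subset_erase.1 hAs).1, hA⟩
    · rintro ⟨hAs, hA⟩
      by_cases hcA : c ∈ A
      · refine .inl ⟨A.erase c, ?_, insert_erase hcA⟩
        rw [h₁.mem_iff, subset_and_isAntichain_insert_iff hc (notMem_erase c A), insert_erase hcA]
        exact ⟨hAs, hA⟩
      · exact .inr ((h₂.mem_iff A).2 ⟨subset_erase.2 ⟨hAs, hcA⟩, hA⟩)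
  isChain := by
    refine List.IsChain.append ?_ h₂.isChain ?_
    · refine List.isChain_map_of_isChain (insert c)
        (fun A B h => (card_le_card (insert_symmDiff_insert_subset c A B)).trans h) ?_
      exact List.isChain_reverse.2 (h₁.isChain.imp fun A B h => by rwa [symmDiff_comm])
    · -- the junction joins `insert c A₁` with `B`, where `#A₁ ≤ 1` and `#B ≤ 1`
      intro A hA B hB
      rw [List.getLast?_map, List.getLast?_reverse] at hA
      obtain ⟨A₁, hA₁, rfl⟩ := Option.mem_map.1 hA
      have := h₁.card_le_one_of_mem_head? A₁ hA₁
      calc #(insert c A₁ ∆ B) ≤ #(insert c A₁ ∪ B) := card_le_card symmDiff_le_sup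
        _ ≤ (#A₁ + 1) + 1 :=
          (card_union_le _ _).trans
            (add_le_add (card_insert_le _ _) (h₂.card_le_one_of_mem_head? B hB))
        _ ≤ 3 := by omega
  card_le_one_of_mem_head? A hA := by
    rw [h₁.head?_reverse_map_insert_append, Option.mem_some_iff] at hA
    simp [← hA]
  getLast? := by
    rw [List.getLast?_append, h₂.getLast?]
    rfl

end Step

theorem exists_isFlipPath (s : Finset α) : ∃ L, IsFlipPath s L := by
  classical
  induction s using Finset.strongInduction with
  | H s ih =>
    obtain rfl | ⟨c, hc⟩ := s.eq_empty_or_nonempty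
    · exact ⟨[∅], isFlipPath_empty⟩
    have hcc : ¬IncompRel (· ≤ ·) c c := fun h => h.ne rfl
    obtain ⟨L₁, h₁⟩ := ih _ (filter_ssubset.2 ⟨c, hc, hcc⟩)
    obtain ⟨L₂, h₂⟩ := ih _ (erase_ssubset hc)
    exact ⟨_, h₁.reverse_map_insert_append hc h₂⟩

end FlipPath

/-- For every non-empty finite poset `P`, the flip graph `𝓕³(P)` on the antichains of
`P` (two antichains adjacent iff their symmetric difference has size at most 3) contains
a Hamiltonian path from some antichain of size 1 to the empty antichain: there is a list
visiting every antichain exactly once, in which consecutive antichains differ in at most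
three elements, starting at a singleton and ending at `∅`. -/
theorem stmt_18 (α : Type*) [Fintype α] [PartialOrder α] [DecidableEq α] [Nonempty α] :
    ∃ L : List (Finset α), L.Nodup ∧
      (∀ A : Finset α, A ∈ L ↔ IsAntichain (· ≤ ·) (A : Set α)) ∧
      List.Chain' (fun A B => (symmDiff A B).card ≤ 3) L ∧
      (∃ a : α, L.head? = some {a}) ∧ L.getLast? = some ∅ := by
  classical
  obtain ⟨c⟩ := ‹Nonempty α›
  obtain ⟨L₁, h₁⟩ := exists_isFlipPath {x ∈ univ | IncompRel (· ≤ ·) c x}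
  obtain ⟨L₂, h₂⟩ := exists_isFlipPath (univ.erase c)
  have h := h₁.reverse_map_insert_append (mem_univ c) h₂
  exact ⟨_, h.nodup, fun A => by simpa using h.mem_iff A, h.isChain,
    ⟨c, h₁.head?_reverse_map_insert_append L₂⟩, h.getLast?⟩
end
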